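/- For subspaces N_c, N_s, N_e of ℂ^n, the sum of the seven subspaces V_n, V_c, V_s, V_e, V_cs, V_ce, V_se (defined as in the eight-subspace decomposition) equals N_c + N_s + N_e. -/

import Mathlib

/-!
Every piece lies in one of `N_c, N_s, N_e`. Conversely, `N_c` contains `A = V_n + V_s + V_e`, and
`V_se` is by definition `Aᗮ ∩ N_c`, so `N_c = A ⊕ (Aᗮ ∩ N_c)` lies in the sum of the pieces;
likewise for `N_s` (with `V_ce`) and `N_e` (with `V_cs`).
-/

open Matrix

noncomputable section

/-- The ambient space `ℂ^n` with its standard Hermitian inner product. -/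
abbrev Cn (n : ℕ) := EuclideanSpace ℂ (Fin n)

variable {n : ℕ}

/-- `V_n = N_c ∩ N_s ∩ N_e`. -/
def Vn (Nc Ns Ne : Submodule ℂ (Cn n)) : Submodule ℂ (Cn n) := Nc ⊓ Ns ⊓ Ne

/-- `V_c = V_nᗮ ∩ N_s ∩ N_e`. -/
def Vc (Nc Ns Ne : Submodule ℂ (Cn n)) : Submodule ℂ (Cn n) := (Vn Nc Ns Ne)ᗮ ⊓ Ns ⊓ Ne

/-- `V_s = V_nᗮ ∩ N_e ∩ N_c`. -/
def Vs (Nc Ns Ne : Submodule ℂ (Cn n)) : Submodule ℂ (Cn n) := (Vn Nc Ns Ne)ᗮ ⊓ Ne ⊓ Nc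

/-- `V_e = V_nᗮ ∩ N_c ∩ N_s`. -/
def Ve (Nc Ns Ne : Submodule ℂ (Cn n)) : Submodule ℂ (Cn n) := (Vn Nc Ns Ne)ᗮ ⊓ Nc ⊓ Ns

/-- `V_cs = (V_n ⊕ V_c ⊕ V_s)ᗮ ∩ N_e`. -/
def Vcs (Nc Ns Ne : Submodule ℂ (Cn n)) : Submodule ℂ (Cn n) :=
  (Vn Nc Ns Ne ⊔ Vc Nc Ns Ne ⊔ Vs Nc Ns Ne)ᗮ ⊓ Ne

/-- `V_ce = (V_n ⊕ V_e ⊕ V_c)ᗮ ∩ N_s`. -/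
def Vce (Nc Ns Ne : Submodule ℂ (Cn n)) : Submodule ℂ (Cn n) :=
  (Vn Nc Ns Ne ⊔ Ve Nc Ns Ne ⊔ Vc Nc Ns Ne)ᗮ ⊓ Ns

/-- `V_se = (V_n ⊕ V_s ⊕ V_e)ᗮ ∩ N_c`. -/
def Vse (Nc Ns Ne : Submodule ℂ (Cn n)) : Submodule ℂ (Cn n) :=
  (Vn Nc Ns Ne ⊔ Vs Nc Ns Ne ⊔ Ve Nc Ns Ne)ᗮ ⊓ Nc

/-- `V_cse = (V_n + V_c + V_s + V_e + V_cs + V_ce + V_se)ᗮ`. -/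
def Vcse (Nc Ns Ne : Submodule ℂ (Cn n)) : Submodule ℂ (Cn n) :=
  (Vn Nc Ns Ne ⊔ Vc Nc Ns Ne ⊔ Vs Nc Ns Ne ⊔ Ve Nc Ns Ne ⊔ Vcs Nc Ns Ne ⊔
    Vce Nc Ns Ne ⊔ Vse Nc Ns Ne)ᗮ

theorem Submodule.le_of_le_of_orthogonal_inf_le {𝕜 E : Type*} [RCLike 𝕜] [NormedAddCommGroup E]
    [InnerProductSpace 𝕜 E] {U W S : Submodule 𝕜 E} [U.HasOrthogonalProjection] (hUW : U ≤ W)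
    (hUS : U ≤ S) (hWS : Uᗮ ⊓ W ≤ S) : W ≤ S := by
  rw [← Submodule.sup_orthogonal_inf_of_hasOrthogonalProjection hUW]
  exact sup_le hUS hWS

section Pieces

variable (Nc Ns Ne : Submodule ℂ (Cn n))

theorem Vn_sup_Vs_sup_Ve_le : Vn Nc Ns Ne ⊔ Vs Nc Ns Ne ⊔ Ve Nc Ns Ne ≤ Nc := by
  simp only [Vn, Vs, Ve]
  order

theorem Vn_sup_Ve_sup_Vc_le : Vn Nc Ns Ne ⊔ Ve Nc Ns Ne ⊔ Vc Nc Ns Ne ≤ Ns := by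
  simp only [Vn, Ve, Vc]
  order

theorem Vn_sup_Vc_sup_Vs_le : Vn Nc Ns Ne ⊔ Vc Nc Ns Ne ⊔ Vs Nc Ns Ne ≤ Ne := by
  simp only [Vn, Vc, Vs]
  order

end Pieces

/-- The sum of the seven subspaces
`V_n, V_c, V_s, V_e, V_cs, V_ce, V_se` equals `N_c + N_s + N_e`. -/
theorem stmt5 (Nc Ns Ne : Submodule ℂ (Cn n)) :
    Vn Nc Ns Ne ⊔ Vc Nc Ns Ne ⊔ Vs Nc Ns Ne ⊔ Ve Nc Ns Ne ⊔ Vcs Nc Ns Ne ⊔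
        Vce Nc Ns Ne ⊔ Vse Nc Ns Ne =
      Nc ⊔ Ns ⊔ Ne := by
  have hc := Vn_sup_Vs_sup_Ve_le Nc Ns Ne
  have hs := Vn_sup_Ve_sup_Vc_le Nc Ns Ne
  have he := Vn_sup_Vc_sup_Vs_le Nc Ns Ne
  have hcs : Vcs Nc Ns Ne ≤ Ne := inf_le_right
  have hce : Vce Nc Ns Ne ≤ Ns := inf_le_right
  have hse : Vse Nc Ns Ne ≤ Nc := inf_le_right
  refine le_antisymm (by order) (sup_le (sup_le ?_ ?_) ?_)
  · refine Submodule.le_of_le_of_orthogonal_inf_le hc (by order) ?_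
    change Vse Nc Ns Ne ≤ _
    order
  · refine Submodule.le_of_le_of_orthogonal_inf_le hs (by order) ?_
    change Vce Nc Ns Ne ≤ _
    order
  · refine Submodule.le_of_le_of_orthogonal_inf_le he (by order) ?_
    change Vcs Nc Ns Ne ≤ _
    order
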